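/- For any one-state Turing machine, if during a computation the head is on a blank cell and all cells to that side (in the direction of δ(⊔)) are blank, and δ(⊔) = (⊔, L) (resp. (⊔, R)) moves the head further into the blank region, then the machine never halts. -/

import Mathlib

inductive Dir : Type
  | L | R
deriving DecidableEq

def Dir.move : Dir → ℤ
  | .L => -1
  | .R => 1

/-- A one-state Turing machine: a blank symbol, a set of halting symbols
(as a Boolean predicate) and a transition function on the tape alphabet. -/
structure OneStateTM (Γ : Type) where
  blank : Γ
  halt : Γ → Bool
  δ : Γ → Γ × Dir

/-- A configuration: a bi-infinite tape and a head position. -/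
structure Cfg (Γ : Type) where
  tape : ℤ → Γ
  pos : ℤ

/-- One step of the machine; `none` means the machine has halted
(the head reads a halting symbol). -/
def OneStateTM.step {Γ : Type} (M : OneStateTM Γ) (c : Cfg Γ) : Option (Cfg Γ) :=
  if M.halt (c.tape c.pos) then none
  else some ⟨Function.update c.tape c.pos (M.δ (c.tape c.pos)).1,
             c.pos + (M.δ (c.tape c.pos)).2.move⟩

/-- Initial tape: the input written in cells 0,…,len−1, blanks elsewhere. -/
def OneStateTM.initTape {Γ : Type} (M : OneStateTM Γ) (l : List Γ) : ℤ → Γ :=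
  fun i => if i < 0 then M.blank else l.getD i.toNat M.blank

/-- The machine halts starting from configuration `c`. -/
def OneStateTM.HaltsFrom {Γ : Type} (M : OneStateTM Γ) (c : Cfg Γ) : Prop :=
  ∃ n : ℕ, (fun o => Option.bind o M.step)^[n] (some c) = none

/-- The machine halts on input `l` (head initially on the leftmost input symbol). -/
def OneStateTM.HaltsOn {Γ : Type} (M : OneStateTM Γ) (l : List Γ) : Prop :=
  M.HaltsFrom ⟨M.initTape l, 0⟩

/-! Under the blank transition `δ ⊔ = (⊔, d)` the machine writes back the blank it reads and moves
one cell in direction `d`, so a head facing a blank half-tape keeps facing one, and never reaches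
a halting symbol. -/

namespace OneStateTM

variable {Γ : Type} (M : OneStateTM Γ)

theorem not_haltsFrom_of_invariant (P : Cfg Γ → Prop)
    (hP : ∀ c, P c → ∃ c', M.step c = some c' ∧ P c') {c : Cfg Γ} (hc : P c) :
    ¬ M.HaltsFrom c := by
  rintro ⟨n, hn⟩
  suffices h : ∀ m : ℕ, ∃ c', (fun o => Option.bind o M.step)^[m] (some c) = some c' ∧ P c' by
    obtain ⟨c', hc', -⟩ := h n
    simp [hn] at hc'
  intro m
  induction m with
  | zero => exact ⟨c, rfl, hc⟩
  | succ k ih =>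
    obtain ⟨c', hc', hPc'⟩ := ih
    obtain ⟨c'', hstep, hPc''⟩ := hP c' hPc'
    exact ⟨c'', by rw [Function.iterate_succ_apply', hc', Option.bind_some, hstep], hPc''⟩

theorem step_eq_some_of_blank {d : Dir} (hhalt : M.halt M.blank = false)
    (hδ : M.δ M.blank = (M.blank, d)) {c : Cfg Γ} (hc : c.tape c.pos = M.blank) :
    M.step c = some ⟨c.tape, c.pos + d.move⟩ := by
  simp [step, hc, hhalt, hδ]

end OneStateTM

namespace Cfg

variable {Γ : Type}

-- `0 ≤ (i - c.pos) * d.move` says that cell `i` is the head cell or lies beyond it in direction `d`.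
def BlankToward (c : Cfg Γ) (b : Γ) (d : Dir) : Prop :=
  ∀ i : ℤ, 0 ≤ (i - c.pos) * d.move → c.tape i = b

theorem BlankToward.read {c : Cfg Γ} {b : Γ} {d : Dir} (h : c.BlankToward b d) :
    c.tape c.pos = b :=
  h c.pos (by simp)

theorem BlankToward.move {c : Cfg Γ} {b : Γ} {d : Dir} (h : c.BlankToward b d) :
    (⟨c.tape, c.pos + d.move⟩ : Cfg Γ).BlankToward b d := by
  intro i hi
  apply h i
  cases d <;> simp only [Dir.move] at hi ⊢ <;> linarith

end Cfg

/-- if the head sits on a blank cell, all cells on the side toward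
which δ(⊔) moves are blank, and δ(⊔) = (⊔, L) (resp. (⊔, R)), the machine never halts. -/
theorem never_halts_in_blank_region :
    ∀ (Γ : Type) (M : OneStateTM Γ) (c : Cfg Γ),
      M.halt M.blank = false →
      c.tape c.pos = M.blank →
      ((M.δ M.blank = (M.blank, Dir.L) ∧ ∀ i : ℤ, i ≤ c.pos → c.tape i = M.blank) ∨
       (M.δ M.blank = (M.blank, Dir.R) ∧ ∀ i : ℤ, c.pos ≤ i → c.tape i = M.blank)) →
      ¬ M.HaltsFrom c := by
  intro Γ M c hhalt _ hregion
  obtain ⟨d, hδ, hc⟩ : ∃ d, M.δ M.blank = (M.blank, d) ∧ c.BlankToward M.blank d := by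
    rcases hregion with ⟨hδ, hblank⟩ | ⟨hδ, hblank⟩
    · exact ⟨.L, hδ, fun i hi => hblank i (by simp only [Dir.move] at hi; linarith)⟩
    · exact ⟨.R, hδ, fun i hi => hblank i (by simp only [Dir.move] at hi; linarith)⟩
  refine M.not_haltsFrom_of_invariant (fun c => c.BlankToward M.blank d) ?_ hc
  intro c hc
  exact ⟨_, M.step_eq_some_of_blank hhalt hδ hc.read, hc.move⟩
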